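/- For i > 1 and Xᵢ ∈ {Eᵢ, Fᵢ}, X₁ ∈ {E₁, F₁}, one has Xᵢ X₁ = conj(X₁) Xᵢ. -/
import Mathlib


open Matrix

variable {R : Type*} [CommRing R]

/-- Equivalence identifying `Fin (2^n) ⊕ Fin (2^n)` with `Fin (2^(n+1))`. -/
def blockEquiv (n : ℕ) : Fin (2^n) ⊕ Fin (2^n) ≃ Fin (2^(n+1)) :=
  finSumFinEquiv.trans (finCongr (by rw [pow_succ, mul_two]))

/-- Build a `2^(n+1) × 2^(n+1)` matrix from four `2^n × 2^n` blocks. -/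
def blocks {n : ℕ} (A B C D : Matrix (Fin (2^n)) (Fin (2^n)) R) :
    Matrix (Fin (2^(n+1))) (Fin (2^(n+1))) R :=
  Matrix.reindex (blockEquiv n) (blockEquiv n) (Matrix.fromBlocks A B C D)

/-- The pair (Suslin matrix, Suslin conjugate) of vectors `v, w : Fin (n+1) → R`,
defined recursively: `S(v,w) = [[a₁, S(v',w')],[-conj S(v',w'), b₁]]`,
`conj S(v,w) = [[b₁, -S(v',w')],[conj S(v',w'), a₁]]`. -/
def suslinPair : (n : ℕ) → (Fin (n+1) → R) → (Fin (n+1) → R) →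
    (Matrix (Fin (2^n)) (Fin (2^n)) R) × (Matrix (Fin (2^n)) (Fin (2^n)) R)
  | 0, v, w => (Matrix.of fun _ _ => v 0, Matrix.of fun _ _ => w 0)
  | n+1, v, w =>
      let P := suslinPair n (Fin.tail v) (Fin.tail w)
      (blocks (v 0 • (1 : Matrix (Fin (2^n)) (Fin (2^n)) R)) P.1 (-P.2) (w 0 • 1),
       blocks (w 0 • (1 : Matrix (Fin (2^n)) (Fin (2^n)) R)) (-P.1) P.2 (v 0 • 1))

/-- The Suslin matrix `S_{n}(v,w)` of `v, w : Fin (n+1) → R`. -/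
def suslinS {n : ℕ} (v w : Fin (n+1) → R) : Matrix (Fin (2^n)) (Fin (2^n)) R :=
  (suslinPair n v w).1

/-- The Suslin conjugate `conj (S_{n}(v,w))`. -/
def suslinConj {n : ℕ} (v w : Fin (n+1) → R) : Matrix (Fin (2^n)) (Fin (2^n)) R :=
  (suslinPair n v w).2

lemma blocks_mul {n : ℕ} (A B C D A' B' C' D' : Matrix (Fin (2^n)) (Fin (2^n)) R) :
    blocks A B C D * blocks A' B' C' D' =
      blocks (A*A'+B*C') (A*B'+B*D') (C*A'+D*C') (C*B'+D*D') := by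
  simp only [blocks, Matrix.reindex_apply, Matrix.submatrix_mul_equiv,
    Matrix.fromBlocks_multiply]

lemma suslinPair_zero (n : ℕ) : suslinPair n (0 : Fin (n+1) → R) 0 = (0, 0) := by
  induction n with
  | zero => simp only [suslinPair]; rfl
  | succ m ih =>
    have h : Fin.tail (0 : Fin (m+2) → R) = 0 := rfl
    simp only [suslinPair, h, ih, Pi.zero_apply, zero_smul, neg_zero, Prod.mk.injEq]
    constructor <;> (simp only [blocks, neg_zero, zero_smul, Matrix.fromBlocks_zero,
      Matrix.reindex_apply, Matrix.submatrix_zero]; rfl)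

/-- for i > 1 (here i ≠ 0), Xᵢ ∈ {Eᵢ, Fᵢ} and X₁ ∈ {E₁, F₁}:
Xᵢ X₁ = conj(X₁) Xᵢ. -/
theorem suslin_basis_comm {n : ℕ} (i : Fin (n+1)) (hi : i ≠ 0) :
    let Eᵢ : Matrix (Fin (2^n)) (Fin (2^n)) R := suslinS (Pi.single i 1) 0
    let Fᵢ : Matrix (Fin (2^n)) (Fin (2^n)) R := suslinS 0 (Pi.single i 1)
    let E₁ : Matrix (Fin (2^n)) (Fin (2^n)) R := suslinS (Pi.single 0 1) 0
    let F₁ : Matrix (Fin (2^n)) (Fin (2^n)) R := suslinS 0 (Pi.single 0 1)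
    let cE₁ : Matrix (Fin (2^n)) (Fin (2^n)) R := suslinConj (Pi.single 0 1) 0
    let cF₁ : Matrix (Fin (2^n)) (Fin (2^n)) R := suslinConj 0 (Pi.single 0 1)
    Eᵢ * E₁ = cE₁ * Eᵢ ∧ Eᵢ * F₁ = cF₁ * Eᵢ ∧
    Fᵢ * E₁ = cE₁ * Fᵢ ∧ Fᵢ * F₁ = cF₁ * Fᵢ := by
  cases n with
  | zero => exact absurd (Fin.fin_one_eq_zero i) hi
  | succ m =>
    obtain ⟨j, rfl⟩ : ∃ j : Fin (m+1), j.succ = i := Fin.exists_succ_eq.mpr hi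
    have hv0 : (Pi.single j.succ 1 : Fin (m+2) → R) 0 = 0 :=
      Pi.single_eq_of_ne (Fin.succ_ne_zero j).symm _
    have htail1 : Fin.tail (Pi.single 0 1 : Fin (m+2) → R) = 0 :=
      funext fun k => Pi.single_eq_of_ne (Fin.succ_ne_zero k) _
    have htail0 : Fin.tail (0 : Fin (m+2) → R) = 0 := rfl
    simp only [suslinS, suslinConj, suslinPair, hv0, htail1, htail0, Pi.single_eq_same,
      Pi.zero_apply, suslinPair_zero, zero_smul, one_smul, neg_zero, blocks_mul,
      zero_mul, mul_zero, add_zero, zero_add, mul_one, one_mul]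
    exact ⟨trivial, trivial, trivial, trivial⟩
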